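/- arXiv:1809.07744 — 4 statements merged into one kernel-verified Lean document; each statement's English description precedes it below -/
import Mathlib

section
/- Let f be a multivariate polynomial with real coefficients in N variables. Then f is SOS-convex (i.e., its Hessian matrix of second partial derivatives, viewed as an N×N matrix with polynomial entries, factors as ∇²f = L·Lᵀ for some N×a matrix L with polynomial entries) if and only if the polynomial (x, z) ↦ zᵀ ∇²f(x) z, viewed as a polynomial in the 2N variables (x₁,…,x_N, z₁,…,z_N), is a sum of squares of polynomials. -/
open MvPolynomial

/-- A polynomial `p` is a sum of squares if `p = ∑ qᵢ²` for finitely many polynomials `qᵢ`. -/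
def IsSumOfSquares {σ : Type*} (p : MvPolynomial σ ℝ) : Prop :=
  ∃ (m : ℕ) (q : Fin m → MvPolynomial σ ℝ), p = ∑ k, (q k) ^ 2

/-!
If `∇²f = L Lᵀ`, then `zᵀ ∇²f z = ∑ₖ (∑ᵢ zᵢ Lᵢₖ)²`. Conversely, let `zᵀ ∇²f(x) z = ∑ₖ qₖ(x, z)²`.
Setting `z = 0` gives `∑ₖ qₖ(x, 0)² = 0`, so every `qₖ(x, 0)` vanishes. Hence differentiating
both sides in `zᵢ` and `zⱼ` and then setting `z = 0` leaves only
`2 ∂ᵢ∂ⱼf = 2 ∑ₖ ∂_{zᵢ}qₖ(x, 0) ∂_{zⱼ}qₖ(x, 0)` (the Hessian is symmetric), so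
`Lᵢₖ = ∂_{zᵢ}qₖ(x, 0)` factors the Hessian.
-/

namespace MvPolynomial

variable {R σ τ : Type*}

theorem pderiv_pderiv_comm [CommSemiring R] (i j : σ) (p : MvPolynomial σ R) :
    pderiv i (pderiv j p) = pderiv j (pderiv i p) := by
  classical
  induction p using MvPolynomial.induction_on with
  | C a => simp
  | add p q hp hq => simp [hp, hq]
  | mul_X p k hp =>
    simp only [pderiv_mul, pderiv_X, Pi.single_apply, map_add, apply_ite, pderiv_one, map_zero, hp]
    split_ifs <;> ring

theorem eq_zero_of_sum_sq_eq_zero [CommRing R] [LinearOrder R] [IsStrictOrderedRing R]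
    {ι : Type*} [Fintype ι] {q : ι → MvPolynomial σ R} (h : ∑ k, q k ^ 2 = 0) (k : ι) :
    q k = 0 := by
  refine funext fun x => ?_
  have hx : ∑ l, eval x (q l) ^ 2 = 0 := by simpa using congrArg (eval x) h
  simpa using (Finset.sum_eq_zero_iff_of_nonneg fun l _ => sq_nonneg _).mp hx k (Finset.mem_univ k)

noncomputable def evalInrZero (R σ τ : Type*) [CommSemiring R] :
    MvPolynomial (σ ⊕ τ) R →ₐ[R] MvPolynomial σ R :=
  aeval (Sum.elim X 0)

section CommSemiring
variable [CommSemiring R]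

@[simp]
theorem evalInrZero_rename_inl (p : MvPolynomial σ R) :
    evalInrZero R σ τ (rename Sum.inl p) = p := by
  simp only [evalInrZero, aeval_rename, Function.comp_def, Sum.elim_inl, aeval_X_left_apply]

@[simp]
theorem evalInrZero_X_inr (i : τ) : evalInrZero R σ τ (X (Sum.inr i)) = 0 := by
  simp [evalInrZero]

@[simp]
theorem pderiv_inr_rename_inl (i : τ) (p : MvPolynomial σ R) :
    pderiv (Sum.inr i) (rename Sum.inl p) = 0 := by
  induction p using MvPolynomial.induction_on with
  | C a => simp
  | add p q hp hq => simp [hp, hq]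
  | mul_X p j hp => simp [hp]

theorem evalInrZero_pderiv_pderiv_sq {p : MvPolynomial (σ ⊕ τ) R}
    (hp : evalInrZero R σ τ p = 0) (a b : σ ⊕ τ) :
    evalInrZero R σ τ (pderiv a (pderiv b (p ^ 2))) =
      2 * evalInrZero R σ τ (pderiv a p) * evalInrZero R σ τ (pderiv b p) := by
  simp only [sq, pderiv_mul, map_add, map_mul, hp, mul_zero, zero_mul, add_zero, zero_add]
  ring

/-- `zᵀ H(x) z`, where `x` are the variables `Sum.inl` and `z` the variables `Sum.inr`. -/
noncomputable def quadForm [Fintype τ] (H : Matrix τ τ (MvPolynomial σ R)) :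
    MvPolynomial (σ ⊕ τ) R :=
  ∑ i, ∑ j, X (Sum.inr i) * rename Sum.inl (H i j) * X (Sum.inr j)

variable [Fintype τ]

theorem quadForm_mul_transpose {κ : Type*} [Fintype κ] (L : Matrix τ κ (MvPolynomial σ R)) :
    quadForm (L * L.transpose) = ∑ k, (∑ i, X (Sum.inr i) * rename Sum.inl (L i k)) ^ 2 := by
  simp only [quadForm, Matrix.mul_apply, Matrix.transpose_apply, map_sum, Finset.mul_sum,
    Finset.sum_mul]
  rw [Finset.sum_comm_cycle]
  simp only [sq, Finset.sum_mul_sum, map_mul]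
  exact Finset.sum_congr rfl fun _ _ => Finset.sum_congr rfl fun _ _ =>
    Finset.sum_congr rfl fun _ _ => by ring

theorem evalInrZero_quadForm (H : Matrix τ τ (MvPolynomial σ R)) :
    evalInrZero R σ τ (quadForm H) = 0 := by
  simp only [quadForm, map_sum, map_mul, evalInrZero_X_inr, zero_mul, Finset.sum_const_zero]

theorem pderiv_inr_quadForm (H : Matrix τ τ (MvPolynomial σ R)) (j : τ) :
    pderiv (Sum.inr j) (quadForm H) =
      ∑ i, X (Sum.inr i) * rename Sum.inl (H i j) +
        ∑ i, X (Sum.inr i) * rename Sum.inl (H j i) := by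
  classical
  simp [quadForm, pderiv_inr_rename_inl, pderiv_X, Pi.single_apply, Finset.sum_add_distrib]

theorem pderiv_inr_pderiv_inr_quadForm (H : Matrix τ τ (MvPolynomial σ R)) (i j : τ) :
    pderiv (Sum.inr i) (pderiv (Sum.inr j) (quadForm H)) = rename Sum.inl (H i j + H j i) := by
  classical
  simp [pderiv_inr_quadForm, pderiv_X, Pi.single_apply]

end CommSemiring

theorem exists_eq_mul_transpose_of_quadForm_eq_sum_sq
    [CommRing R] [LinearOrder R] [IsStrictOrderedRing R] [Fintype τ] {ι : Type*} [Fintype ι]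
    {H : Matrix τ τ (MvPolynomial σ R)} (hH : H.IsSymm) {q : ι → MvPolynomial (σ ⊕ τ) R}
    (hq : quadForm H = ∑ k, q k ^ 2) :
    ∃ L : Matrix τ ι (MvPolynomial σ R), H = L * L.transpose := by
  have hq0 : ∀ k, evalInrZero R σ τ (q k) = 0 := by
    refine eq_zero_of_sum_sq_eq_zero ?_
    simpa [evalInrZero_quadForm] using (congrArg (evalInrZero R σ τ) hq).symm
  refine ⟨Matrix.of fun i k => evalInrZero R σ τ (pderiv (Sum.inr i) (q k)),
    Matrix.ext fun i j => ?_⟩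
  have h := congrArg (fun p => evalInrZero R σ τ (pderiv (Sum.inr i) (pderiv (Sum.inr j) p))) hq
  simp only [pderiv_inr_pderiv_inr_quadForm, evalInrZero_rename_inl, map_sum,
    evalInrZero_pderiv_pderiv_sq (hq0 _), hH.apply i j, ← two_mul] at h
  refine mul_left_cancel₀ two_ne_zero (h.trans ?_)
  simp [Matrix.mul_apply, Finset.mul_sum, mul_assoc]

end MvPolynomial

/-- Lemma 2.2 of Ahmadi–Parrilo: `f` is SOS-convex (its Hessian factors as `L·Lᵀ` with
polynomial entries) iff `zᵀ ∇²f(x) z`, as a polynomial in the `2N` variables `(x, z)`,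
is a sum of squares. -/
theorem sos_convex_iff_zHz_sos (N : ℕ) (f : MvPolynomial (Fin N) ℝ) :
    (∃ (a : ℕ) (L : Matrix (Fin N) (Fin a) (MvPolynomial (Fin N) ℝ)),
        Matrix.of (fun i j : Fin N => pderiv i (pderiv j f)) = L * L.transpose) ↔
    IsSumOfSquares
      (∑ i : Fin N, ∑ j : Fin N,
        X (Sum.inr i) * rename Sum.inl (pderiv i (pderiv j f)) * X (Sum.inr j) :
        MvPolynomial (Fin N ⊕ Fin N) ℝ) := by
  change _ ↔ IsSumOfSquares (quadForm (Matrix.of fun i j : Fin N => pderiv i (pderiv j f)))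
  constructor
  · rintro ⟨a, L, hL⟩
    exact ⟨a, _, by rw [hL, quadForm_mul_transpose]⟩
  · rintro ⟨m, q, hq⟩
    have hessian_symm : (Matrix.of fun i j : Fin N => pderiv i (pderiv j f)).IsSymm :=
      Matrix.IsSymm.ext fun i j => pderiv_pderiv_comm j i f
    exact ⟨m, exists_eq_mul_transpose_of_quadForm_eq_sum_sq hessian_symm hq⟩
end

section
/- Fix real numbers ω_R, ω_x, ω_y, c̄, s̄, x̄, ȳ. Define f^H : ℝ⁸ → ℝ (in the variables (c_i, s_i, x_i, y_i, c_j, s_j, x_j, y_j)) by f^H = ω_R²·(c_j − c_i·c̄ + s_i·s̄)² + ω_R²·(−s_j + c_i·s̄ + s_i·c̄)² + ω_R²·(s_j − s_i·c̄ − c_i·s̄)² + ω_R²·(c_j + s_i·s̄ − c_i·c̄)² + ω_x²·(x_j − c_i·x̄ + s_i·ȳ − x_i)² + ω_y²·(y_j − s_i·x̄ − c_i·ȳ − y_i)². Then the Hessian of f^H is a constant positive semidefinite 8×8 matrix H, and there exists a real 8×4 matrix L with H = L·Lᵀ; in particular f^H is SOS-convex. -/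
/-!
The first and fourth rotation residuals of `f^H` coincide, and so do the second and third up to
sign, so `f^H y = ‖M y‖²` for a `4 × 8` matrix `M` whose rows are the four distinct linear
residuals weighted by `√2 ωR`, `√2 ωR`, `ωx`, `ωy`. The Hessian of `y ↦ ‖M y‖²` is the constant
`2 Mᵀ M = (√2 Mᵀ)(√2 Mᵀ)ᵀ`.
-/

open Matrix

section SumOfSquares

variable {ι E : Type*} [Fintype ι] [NormedAddCommGroup E] [NormedSpace ℝ E]

theorem hasFDerivAt_sum_sq (ℓ : ι → E →L[ℝ] ℝ) (x : E) :
    HasFDerivAt (fun y => ∑ m, ℓ m y ^ 2) (∑ m, (2 * ℓ m x) • ℓ m) x :=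
  HasFDerivAt.fun_sum fun m _ => ((ℓ m).hasFDerivAt.pow 2).congr_fderiv (by simp)

theorem fderiv_fderiv_sum_sq (ℓ : ι → E →L[ℝ] ℝ) (p u v : E) :
    fderiv ℝ (fun x => fderiv ℝ (fun y => ∑ m, ℓ m y ^ 2) x v) p u =
      2 * ∑ m, ℓ m u * ℓ m v := by
  have hlin : (fun x => fderiv ℝ (fun y => ∑ m, ℓ m y ^ 2) x v) = ∑ m, (2 * ℓ m v) • ℓ m := by
    ext x
    simp only [(hasFDerivAt_sum_sq ℓ x).fderiv, FunLike.coe_sum, Finset.sum_apply,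
      FunLike.coe_smul, Pi.smul_apply, smul_eq_mul]
    exact Finset.sum_congr rfl fun m _ => by ring
  rw [hlin, ContinuousLinearMap.fderiv, Finset.mul_sum]
  simp only [FunLike.coe_sum, Finset.sum_apply, FunLike.coe_smul, Pi.smul_apply, smul_eq_mul]
  exact Finset.sum_congr rfl fun m _ => by ring

end SumOfSquares

theorem hessian_sum_sq_mulVec {κ n : Type*} [Fintype κ] [Fintype n] [DecidableEq n]
    (M : Matrix κ n ℝ) (p : n → ℝ) :
    (Matrix.of fun i j : n =>
      fderiv ℝ (fun x => fderiv ℝ (fun y => ∑ m, (M *ᵥ y) m ^ 2) x (Pi.single j 1)) p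
        (Pi.single i 1)) = (2 : ℝ) • (Mᵀ * M) := by
  ext i j
  have := fderiv_fderiv_sum_sq
    (fun m => ContinuousLinearMap.proj m ∘L LinearMap.toContinuousLinearMap M.mulVecLin)
    p (Pi.single i 1) (Pi.single j 1)
  simpa [mulVec_single_one, Matrix.mul_apply] using this

theorem two_smul_transpose_mul_self {κ n : Type*} [Fintype κ] (M : Matrix κ n ℝ) :
    (2 : ℝ) • (Mᵀ * M) = (√2 • Mᵀ) * (√2 • Mᵀ)ᵀ := by
  rw [transpose_smul, transpose_transpose, Matrix.smul_mul, Matrix.mul_smul, smul_smul,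
    Real.mul_self_sqrt zero_le_two]

noncomputable def poseFactorMatrix (ωR ωx ωy cb sb xb yb : ℝ) : Matrix (Fin 4) (Fin 8) ℝ :=
  !![√2 * ωR * -cb, √2 * ωR * sb, 0, 0, √2 * ωR, 0, 0, 0;
     √2 * ωR * sb, √2 * ωR * cb, 0, 0, 0, -(√2 * ωR), 0, 0;
     ωx * -xb, ωx * yb, -ωx, 0, 0, 0, ωx, 0;
     ωy * -yb, ωy * -xb, 0, -ωy, 0, 0, 0, ωy]

theorem poseFactor_eq_sum_sq (ωR ωx ωy cb sb xb yb : ℝ) :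
    (fun y : Fin 8 → ℝ =>
      ωR ^ 2 * (y 4 - y 0 * cb + y 1 * sb) ^ 2 +
      ωR ^ 2 * (-(y 5) + y 0 * sb + y 1 * cb) ^ 2 +
      ωR ^ 2 * (y 5 - y 1 * cb - y 0 * sb) ^ 2 +
      ωR ^ 2 * (y 4 + y 1 * sb - y 0 * cb) ^ 2 +
      ωx ^ 2 * (y 6 - y 0 * xb + y 1 * yb - y 2) ^ 2 +
      ωy ^ 2 * (y 7 - y 1 * xb - y 0 * yb - y 3) ^ 2) =
    fun y => ∑ m, (poseFactorMatrix ωR ωx ωy cb sb xb yb *ᵥ y) m ^ 2 := by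
  funext y
  have h2 : √2 ^ 2 = 2 := Real.sq_sqrt zero_le_two
  simp only [poseFactorMatrix, Fin.sum_univ_four, mulVec, dotProduct, Fin.sum_univ_eight,
    of_apply, cons_val', cons_val_zero, cons_val_one, cons_val, empty_val', cons_val_fin_one]
  linear_combination
    -ωR ^ 2 * ((y 4 - y 0 * cb + y 1 * sb) ^ 2 + (-(y 5) + y 0 * sb + y 1 * cb) ^ 2) * h2

/-- The pose-graph SLAM factor `f^H` in the variables
`(c_i, s_i, x_i, y_i, c_j, s_j, x_j, y_j)` has a constant positive semidefinite Hessian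
`H` which factors as `H = L·Lᵀ` for a real `8 × 4` matrix `L`; in particular `f^H` is
SOS-convex. -/
theorem pose_factor_sos_convex (ωR ωx ωy cb sb xb yb : ℝ) :
    ∃ H : Matrix (Fin 8) (Fin 8) ℝ,
      (∀ p : Fin 8 → ℝ,
        (Matrix.of fun i j : Fin 8 =>
          fderiv ℝ (fun x : Fin 8 → ℝ =>
              fderiv ℝ (fun y : Fin 8 → ℝ =>
                  ωR ^ 2 * (y 4 - y 0 * cb + y 1 * sb) ^ 2 +
                  ωR ^ 2 * (-(y 5) + y 0 * sb + y 1 * cb) ^ 2 +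
                  ωR ^ 2 * (y 5 - y 1 * cb - y 0 * sb) ^ 2 +
                  ωR ^ 2 * (y 4 + y 1 * sb - y 0 * cb) ^ 2 +
                  ωx ^ 2 * (y 6 - y 0 * xb + y 1 * yb - y 2) ^ 2 +
                  ωy ^ 2 * (y 7 - y 1 * xb - y 0 * yb - y 3) ^ 2) x
                (Pi.single j 1)) p (Pi.single i 1)) = H) ∧
      H.PosSemidef ∧
      ∃ L : Matrix (Fin 8) (Fin 4) ℝ, H = L * L.transpose := by
  set M := poseFactorMatrix ωR ωx ωy cb sb xb yb
  have hLL := two_smul_transpose_mul_self M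
  refine ⟨(2 : ℝ) • (Mᵀ * M), fun p => ?_, ?_, √2 • Mᵀ, hLL⟩
  · rw [poseFactor_eq_sum_sq]
    exact hessian_sum_sq_mulVec M p
  · rw [hLL]
    simpa using posSemidef_self_mul_conjTranspose (√2 • Mᵀ)
end

section
/- Fix real numbers ω_R, ω_x, ω_y, c̄, s̄, x̄, ȳ. The function f^H : ℝ⁸ → ℝ defined by f^H(c_i, s_i, x_i, y_i, c_j, s_j, x_j, y_j) = ω_R²·(c_j − c_i·c̄ + s_i·s̄)² + ω_R²·(−s_j + c_i·s̄ + s_i·c̄)² + ω_R²·(s_j − s_i·c̄ − c_i·s̄)² + ω_R²·(c_j + s_i·s̄ − c_i·c̄)² + ω_x²·(x_j − c_i·x̄ + s_i·ȳ − x_i)² + ω_y²·(y_j − s_i·x̄ − c_i·ȳ − y_i)² is convex on all of ℝ⁸. -/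
private lemma sq_term_convex (c A B a b : ℝ) (ha : 0 ≤ a) (hb : 0 ≤ b) (hab : a + b = 1) :
    c ^ 2 * (a * A + b * B) ^ 2 ≤ a * (c ^ 2 * A ^ 2) + b * (c ^ 2 * B ^ 2) := by
  have hb' : b = 1 - a := by linarith
  subst hb'
  have key : a * (c ^ 2 * A ^ 2) + (1 - a) * (c ^ 2 * B ^ 2)
      - c ^ 2 * (a * A + (1 - a) * B) ^ 2 = a * (1 - a) * (c * (A - B)) ^ 2 := by ring
  nlinarith [mul_nonneg (mul_nonneg ha hb) (sq_nonneg (c * (A - B))), key]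

/-- The pose-graph SLAM factor `f^H` in the variables
`(c_i, s_i, x_i, y_i, c_j, s_j, x_j, y_j)` is convex on all of `ℝ⁸`. -/
theorem pose_factor_convex (ωR ωx ωy cb sb xb yb : ℝ) :
    ConvexOn ℝ (Set.univ : Set (Fin 8 → ℝ)) (fun y : Fin 8 → ℝ =>
      ωR ^ 2 * (y 4 - y 0 * cb + y 1 * sb) ^ 2 +
      ωR ^ 2 * (-(y 5) + y 0 * sb + y 1 * cb) ^ 2 +
      ωR ^ 2 * (y 5 - y 1 * cb - y 0 * sb) ^ 2 +
      ωR ^ 2 * (y 4 + y 1 * sb - y 0 * cb) ^ 2 +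
      ωx ^ 2 * (y 6 - y 0 * xb + y 1 * yb - y 2) ^ 2 +
      ωy ^ 2 * (y 7 - y 1 * xb - y 0 * yb - y 3) ^ 2) := by
  refine ⟨convex_univ, ?_⟩
  intro u _ v _ a b ha hb hab
  simp only [Pi.add_apply, Pi.smul_apply, smul_eq_mul]
  have h1 := sq_term_convex ωR (u 4 - u 0 * cb + u 1 * sb) (v 4 - v 0 * cb + v 1 * sb) a b ha hb hab
  have h2 := sq_term_convex ωR (-(u 5) + u 0 * sb + u 1 * cb) (-(v 5) + v 0 * sb + v 1 * cb) a b ha hb hab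
  have h3 := sq_term_convex ωR (u 5 - u 1 * cb - u 0 * sb) (v 5 - v 1 * cb - v 0 * sb) a b ha hb hab
  have h4 := sq_term_convex ωR (u 4 + u 1 * sb - u 0 * cb) (v 4 + v 1 * sb - v 0 * cb) a b ha hb hab
  have h5 := sq_term_convex ωx (u 6 - u 0 * xb + u 1 * yb - u 2) (v 6 - v 0 * xb + v 1 * yb - v 2) a b ha hb hab
  have h6 := sq_term_convex ωy (u 7 - u 1 * xb - u 0 * yb - u 3) (v 7 - v 1 * xb - v 0 * yb - v 3) a b ha hb hab
  have e1 : a * u 4 + b * v 4 - (a * u 0 + b * v 0) * cb + (a * u 1 + b * v 1) * sb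
      = a * (u 4 - u 0 * cb + u 1 * sb) + b * (v 4 - v 0 * cb + v 1 * sb) := by ring
  have e2 : -(a * u 5 + b * v 5) + (a * u 0 + b * v 0) * sb + (a * u 1 + b * v 1) * cb
      = a * (-(u 5) + u 0 * sb + u 1 * cb) + b * (-(v 5) + v 0 * sb + v 1 * cb) := by ring
  have e3 : a * u 5 + b * v 5 - (a * u 1 + b * v 1) * cb - (a * u 0 + b * v 0) * sb
      = a * (u 5 - u 1 * cb - u 0 * sb) + b * (v 5 - v 1 * cb - v 0 * sb) := by ring
  have e4 : a * u 4 + b * v 4 + (a * u 1 + b * v 1) * sb - (a * u 0 + b * v 0) * cb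
      = a * (u 4 + u 1 * sb - u 0 * cb) + b * (v 4 + v 1 * sb - v 0 * cb) := by ring
  have e5 : a * u 6 + b * v 6 - (a * u 0 + b * v 0) * xb + (a * u 1 + b * v 1) * yb
      - (a * u 2 + b * v 2)
      = a * (u 6 - u 0 * xb + u 1 * yb - u 2) + b * (v 6 - v 0 * xb + v 1 * yb - v 2) := by ring
  have e6 : a * u 7 + b * v 7 - (a * u 1 + b * v 1) * xb - (a * u 0 + b * v 0) * yb
      - (a * u 3 + b * v 3)
      = a * (u 7 - u 1 * xb - u 0 * yb - u 3) + b * (v 7 - v 1 * xb - v 0 * yb - v 3) := by ring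
  rw [e1, e2, e3, e4, e5, e6]
  have eR : a * (ωR ^ 2 * (u 4 - u 0 * cb + u 1 * sb) ^ 2 +
      ωR ^ 2 * (-(u 5) + u 0 * sb + u 1 * cb) ^ 2 +
      ωR ^ 2 * (u 5 - u 1 * cb - u 0 * sb) ^ 2 +
      ωR ^ 2 * (u 4 + u 1 * sb - u 0 * cb) ^ 2 +
      ωx ^ 2 * (u 6 - u 0 * xb + u 1 * yb - u 2) ^ 2 +
      ωy ^ 2 * (u 7 - u 1 * xb - u 0 * yb - u 3) ^ 2) +
    b * (ωR ^ 2 * (v 4 - v 0 * cb + v 1 * sb) ^ 2 +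
      ωR ^ 2 * (-(v 5) + v 0 * sb + v 1 * cb) ^ 2 +
      ωR ^ 2 * (v 5 - v 1 * cb - v 0 * sb) ^ 2 +
      ωR ^ 2 * (v 4 + v 1 * sb - v 0 * cb) ^ 2 +
      ωx ^ 2 * (v 6 - v 0 * xb + v 1 * yb - v 2) ^ 2 +
      ωy ^ 2 * (v 7 - v 1 * xb - v 0 * yb - v 3) ^ 2)
    = (a * (ωR ^ 2 * (u 4 - u 0 * cb + u 1 * sb) ^ 2) + b * (ωR ^ 2 * (v 4 - v 0 * cb + v 1 * sb) ^ 2)) +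
      (a * (ωR ^ 2 * (-(u 5) + u 0 * sb + u 1 * cb) ^ 2) + b * (ωR ^ 2 * (-(v 5) + v 0 * sb + v 1 * cb) ^ 2)) +
      (a * (ωR ^ 2 * (u 5 - u 1 * cb - u 0 * sb) ^ 2) + b * (ωR ^ 2 * (v 5 - v 1 * cb - v 0 * sb) ^ 2)) +
      (a * (ωR ^ 2 * (u 4 + u 1 * sb - u 0 * cb) ^ 2) + b * (ωR ^ 2 * (v 4 + v 1 * sb - v 0 * cb) ^ 2)) +
      (a * (ωx ^ 2 * (u 6 - u 0 * xb + u 1 * yb - u 2) ^ 2) + b * (ωx ^ 2 * (v 6 - v 0 * xb + v 1 * yb - v 2) ^ 2)) +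
      (a * (ωy ^ 2 * (u 7 - u 1 * xb - u 0 * yb - u 3) ^ 2) + b * (ωy ^ 2 * (v 7 - v 1 * xb - v 0 * yb - v 3) ^ 2)) := by
    ring
  rw [eR]
  exact add_le_add (add_le_add (add_le_add (add_le_add (add_le_add h1 h2) h3) h4) h5) h6
end

section
/- Let n, w ∈ ℕ, let E be a finite set of pairs (i,j) with i, j ∈ {1,…,n} carrying relative-pose measurement data (ω_R, ω_x, ω_y, c̄, s̄, x̄, ȳ) per edge, and let L be a finite set of pairs (i,ℓ) with i ∈ {1,…,n}, ℓ ∈ {1,…,w} carrying landmark measurement data (ω_x, ω_y, x̄, ȳ) per pair. Then the landmark SLAM objective G : ℝ^{4n+2w} → ℝ, defined on variables (c, s, x, y, lₓ, l_y) by G = Σ_{(i,j)∈E} f^H_{ij}(c_i, s_i, x_i, y_i, c_j, s_j, x_j, y_j) + Σ_{(i,ℓ)∈L} [ ω_x(i,ℓ)²·(lₓ,ℓ − c_i·x̄(i,ℓ) + s_i·ȳ(i,ℓ) − x_i)² + ω_y(i,ℓ)²·(l_y,ℓ − s_i·x̄(i,ℓ) − c_i·ȳ(i,ℓ) − y_i)²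 ], is convex on all of ℝ^{4n+2w}. -/
open Finset

lemma convexOn_finset_sum' {ι V : Type*} [AddCommGroup V] [Module ℝ V]
    (t : Finset ι) (f : ι → V → ℝ) (h : ∀ i ∈ t, ConvexOn ℝ Set.univ (f i)) :
    ConvexOn ℝ Set.univ (fun x => ∑ i ∈ t, f i x) := by
  classical
  induction t using Finset.induction with
  | empty => simpa using convexOn_const (0:ℝ) convex_univ
  | @insert a s hi ih =>
    simp only [Finset.sum_insert hi]
    exact (h a (Finset.mem_insert_self a s)).add
      (ih fun i his => h i (Finset.mem_insert_of_mem his))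

lemma convexOn_sq_linear {V : Type*} [AddCommGroup V] [Module ℝ V]
    (c : ℝ) (f : V → ℝ)
    (hadd : ∀ u v, f (u + v) = f u + f v)
    (hsmul : ∀ (t : ℝ) u, f (t • u) = t * f u) :
    ConvexOn ℝ Set.univ (fun p => c ^ 2 * f p ^ 2) := by
  let L : V →ₗ[ℝ] ℝ := { toFun := f, map_add' := hadd, map_smul' := hsmul }
  have h := ((Even.convexOn_pow (even_two : Even 2)).comp_linearMap L).smul
    (sq_nonneg c)
  simpa [Set.preimage_univ, Function.comp, L] using h

/-- The landmark SLAM objective -- the sum over relative-pose measurement edges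
`(i,j) ∈ E` of the pose-graph factors plus the sum over landmark observations
`(i,ℓ) ∈ L` of the landmark factors, in the variables
`(c, s, x, y, lₓ, l_y) ∈ ℝⁿ × ℝⁿ × ℝⁿ × ℝⁿ × ℝʷ × ℝʷ` -- is convex on all of
`ℝ^{4n+2w}`. -/
theorem landmark_slam_objective_convex (n w : ℕ)
    (E : Finset (Fin n × Fin n)) (L : Finset (Fin n × Fin w))
    (ωR ωx ωy cb sb xb yb : Fin n × Fin n → ℝ)
    (ωxL ωyL xbL ybL : Fin n × Fin w → ℝ) :
    ConvexOn ℝ (Set.univ :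
        Set ((Fin n → ℝ) × (Fin n → ℝ) × (Fin n → ℝ) × (Fin n → ℝ) ×
             (Fin w → ℝ) × (Fin w → ℝ)))
      (fun p : (Fin n → ℝ) × (Fin n → ℝ) × (Fin n → ℝ) × (Fin n → ℝ) ×
               (Fin w → ℝ) × (Fin w → ℝ) =>
        (∑ e ∈ E,
          (ωR e ^ 2 * (p.1 e.2 - p.1 e.1 * cb e + p.2.1 e.1 * sb e) ^ 2 +
           ωR e ^ 2 * (-(p.2.1 e.2) + p.1 e.1 * sb e + p.2.1 e.1 * cb e) ^ 2 +
           ωR e ^ 2 * (p.2.1 e.2 - p.2.1 e.1 * cb e - p.1 e.1 * sb e) ^ 2 +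
           ωR e ^ 2 * (p.1 e.2 + p.2.1 e.1 * sb e - p.1 e.1 * cb e) ^ 2 +
           ωx e ^ 2 * (p.2.2.1 e.2 - p.1 e.1 * xb e + p.2.1 e.1 * yb e - p.2.2.1 e.1) ^ 2 +
           ωy e ^ 2 * (p.2.2.2.1 e.2 - p.2.1 e.1 * xb e - p.1 e.1 * yb e - p.2.2.2.1 e.1) ^ 2)) +
        (∑ o ∈ L,
          (ωxL o ^ 2 *
              (p.2.2.2.2.1 o.2 - p.1 o.1 * xbL o + p.2.1 o.1 * ybL o - p.2.2.1 o.1) ^ 2 +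
           ωyL o ^ 2 *
              (p.2.2.2.2.2 o.2 - p.2.1 o.1 * xbL o - p.1 o.1 * ybL o - p.2.2.2.1 o.1) ^ 2))) := by
  apply ConvexOn.add
  · apply convexOn_finset_sum'
    intro e _
    refine (((((convexOn_sq_linear _ _ ?_ ?_).add
      (convexOn_sq_linear _ _ ?_ ?_)).add
      (convexOn_sq_linear _ _ ?_ ?_)).add
      (convexOn_sq_linear _ _ ?_ ?_)).add
      (convexOn_sq_linear _ _ ?_ ?_)).add
      (convexOn_sq_linear _ _ ?_ ?_)
    all_goals
      intro u v
      simp only [Prod.fst_add, Prod.snd_add, Pi.add_apply, Prod.smul_fst,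
        Prod.smul_snd, Pi.smul_apply, smul_eq_mul]
      ring
  · apply convexOn_finset_sum'
    intro o _
    refine (convexOn_sq_linear _ _ ?_ ?_).add (convexOn_sq_linear _ _ ?_ ?_)
    all_goals
      intro u v
      simp only [Prod.fst_add, Prod.snd_add, Pi.add_apply, Prod.smul_fst,
        Prod.smul_snd, Pi.smul_apply, smul_eq_mul]
      ring
end
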